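/- For x = (x¹,…,x¹⁴) ∈ ℝ¹⁴ set the quaternions X¹ = x¹ + x⁶·i + x⁹·j + x¹⁰·k, X² = x² + x⁷·i + x¹¹·j + x¹²·k, X³ = x³ + x⁸·i + x¹³·j + x¹⁴·k, and let A(x) be the quaternion hermitian 3×3 matrix A(x) = [[x⁵ − √3·x⁴, √3·X³, √3·X²], [√3·conj(X³), x⁵ + √3·x⁴, √3·X¹], [√3·conj(X²), √3·conj(X¹), −2x⁵]]. Let Υ¹_{IJK} (I,J,K = 1,…,14) be the totally symmetric tensor defined by Υ¹_{IJK} x^I x^J x^K = (1/2)·det₁A(x), where det₁A = a₁₁a₂₂a₃₃ − a₁₂a₂₁a₃₃ − a₁₃a₂₂a₃₁ − a₁₁a₂₃a₃₂ + a₁₃(a₃₂a₂₁) + (a₁₂a₂₃)a₃₁ (a real number). Then Υ¹ satisfies: (i) Υ¹_{IJK} = Υ¹_{(IJK)}; (ii) Σ_J Υ¹_{IJJ} = 0; (iii) Σ_I (Υ¹_{JKI}Υ¹_{LMI} + Υ¹_{LJI}Υ¹_{KMI} + Υ¹_{KLI}Υ¹_{JMI}) = δ_{JK}δ_{LM} +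 δ_{LJ}δ_{KM} + δ_{KL}δ_{JM}. -/

import Mathlib

/-!
Polarizing the cubic form `½ det₁ A(x)` identifies `Υ¹(x, x, ·)` with an explicit quadratic
map `gradA14`. Trace-freeness is then a direct computation, and the quadratic identity (iii) is
the full polarization of the quartic identity `|Υ¹(x, x, ·)|² = |x|⁴`, which `gradA14` satisfies.
-/

open scoped Quaternion

/-- The first real-valued Weierstrass determinant of a 3×3 hermitian quaternion matrix. -/
noncomputable def det1 (a : Fin 3 → Fin 3 → ℍ[ℝ]) : ℍ[ℝ] :=
  a 0 0 * a 1 1 * a 2 2 - a 0 1 * a 1 0 * a 2 2 - a 0 2 * a 1 1 * a 2 0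
    - a 0 0 * a 1 2 * a 2 1 + a 0 2 * (a 2 1 * a 1 0) + (a 0 1 * a 1 2) * a 2 0

/-- The quaternion `X¹ = x¹ + x⁶ i + x⁹ j + x¹⁰ k`. -/
def Xq1 (x : Fin 14 → ℝ) : ℍ[ℝ] := ⟨x 0, x 5, x 8, x 9⟩

/-- The quaternion `X² = x² + x⁷ i + x¹¹ j + x¹² k`. -/
def Xq2 (x : Fin 14 → ℝ) : ℍ[ℝ] := ⟨x 1, x 6, x 10, x 11⟩

/-- The quaternion `X³ = x³ + x⁸ i + x¹³ j + x¹⁴ k`. -/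
def Xq3 (x : Fin 14 → ℝ) : ℍ[ℝ] := ⟨x 2, x 7, x 12, x 13⟩

/-- The generic quaternion hermitian trace-free 3×3 matrix parametrized by `x ∈ ℝ¹⁴`. -/
noncomputable def A14 (x : Fin 14 → ℝ) : Fin 3 → Fin 3 → ℍ[ℝ] :=
  ![![((x 4 - Real.sqrt 3 * x 3 : ℝ) : ℍ[ℝ]),
     ((Real.sqrt 3 : ℝ) : ℍ[ℝ]) * Xq3 x,
     ((Real.sqrt 3 : ℝ) : ℍ[ℝ]) * Xq2 x],
   ![((Real.sqrt 3 : ℝ) : ℍ[ℝ]) * star (Xq3 x),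
     ((x 4 + Real.sqrt 3 * x 3 : ℝ) : ℍ[ℝ]),
     ((Real.sqrt 3 : ℝ) : ℍ[ℝ]) * Xq1 x],
   ![((Real.sqrt 3 : ℝ) : ℍ[ℝ]) * star (Xq2 x),
     ((Real.sqrt 3 : ℝ) : ℍ[ℝ]) * star (Xq1 x),
     ((-2 * x 4 : ℝ) : ℍ[ℝ])]]

open Matrix

section QuarticPolarization

variable {𝕜 V W : Type*} [Field 𝕜] [CharZero 𝕜] [AddCommGroup V] [Module 𝕜 V]
  [AddCommGroup W] [Module 𝕜 W] {B : V →ₗ[𝕜] V →ₗ[𝕜] W}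
  {g : LinearMap.BilinForm 𝕜 W} {h : LinearMap.BilinForm 𝕜 V}

theorem quartic_polar_two_two (hB : ∀ x y, B x y = B y x) (hg : g.IsSymm) (hh : h.IsSymm)
    (hq : ∀ x, g (B x x) (B x x) = h x x ^ 2) (a b : V) :
    g (B a a) (B b b) + 2 * g (B a b) (B a b) = h a a * h b b + 2 * h a b * h a b := by
  -- `16 (p 1 + p (-1)) - (p 2 + p (-2)) - 30 p 0` is `24` times the `t²`-coefficient of a
  -- quartic `p`; here `p t` is either side of `hq (a + t • b)`.
  have e := fun t : 𝕜 => hq (a + t • b)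
  simp only [map_add, map_smul, LinearMap.add_apply, LinearMap.smul_apply, smul_eq_mul,
    hB b a, hh.eq b a, hg.eq (B a b) (B a a), hg.eq (B b b) (B a a),
    hg.eq (B b b) (B a b)] at e
  linear_combination (16 * (e 1 + e (-1)) - (e 2 + e (-2)) - 30 * e 0) / 48

theorem quartic_polar_two_one_one (hB : ∀ x y, B x y = B y x) (hg : g.IsSymm) (hh : h.IsSymm)
    (hq : ∀ x, g (B x x) (B x x) = h x x ^ 2) (a b c : V) :
    g (B a c) (B b b) + 2 * g (B a b) (B c b) = h a c * h b b + 2 * h a b * h c b := by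
  have e := fun s : 𝕜 => quartic_polar_two_two hB hg hh hq (a + s • c) b
  simp only [map_add, map_smul, LinearMap.add_apply, LinearMap.smul_apply, smul_eq_mul,
    hB c a, hh.eq c a, hg.eq (B c b) (B a b)] at e
  linear_combination (e 1 - e (-1)) / 4

theorem quartic_polar (hB : ∀ x y, B x y = B y x) (hg : g.IsSymm) (hh : h.IsSymm)
    (hq : ∀ x, g (B x x) (B x x) = h x x ^ 2) (a b c d : V) :
    g (B a b) (B c d) + g (B c a) (B b d) + g (B b c) (B a d)
      = h a b * h c d + h c a * h b d + h b c * h a d := by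
  have e := fun s : 𝕜 => quartic_polar_two_one_one hB hg hh hq a (b + s • d) c
  simp only [map_add, map_smul, LinearMap.add_apply, LinearMap.smul_apply, smul_eq_mul,
    hB d b, hh.eq d b] at e
  rw [hB c a, hB b c, hh.eq c a, hh.eq b c, hg.eq (B c b) (B a d)]
  linear_combination (e 1 - e (-1)) / 4

end QuarticPolarization

section TensorContraction

variable {ι R : Type*} [Fintype ι] [CommRing R] (Υ : ι → ι → ι → R)

def tensorContract : (ι → R) →ₗ[R] (ι → R) →ₗ[R] ι → R :=
  LinearMap.mk₂ R (fun x y I => ∑ J, ∑ K, Υ J K I * x J * y K)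
    (fun x x' y => by ext I; simp only [Pi.add_apply, add_mul, mul_add, Finset.sum_add_distrib])
    (fun c x y => by ext I; simp only [Pi.smul_apply, smul_eq_mul, Finset.mul_sum, mul_assoc,
      mul_left_comm c])
    (fun x y y' => by ext I; simp only [Pi.add_apply, mul_add, Finset.sum_add_distrib])
    (fun c x y => by ext I; simp only [Pi.smul_apply, smul_eq_mul, Finset.mul_sum, mul_assoc,
      mul_left_comm c])

@[simp]
theorem tensorContract_apply (x y : ι → R) (I : ι) :
    tensorContract Υ x y I = ∑ J, ∑ K, Υ J K I * x J * y K := rfl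

theorem tensorContract_single_single [DecidableEq ι] (J K : ι) :
    tensorContract Υ (Pi.single J 1) (Pi.single K 1) = Υ J K := by
  ext I
  simp [Pi.single_apply]

variable {Υ}

theorem tensorContract_comm (h12 : ∀ I J K, Υ I J K = Υ J I K) (x y : ι → R) :
    tensorContract Υ x y = tensorContract Υ y x := by
  ext I
  rw [tensorContract_apply, tensorContract_apply, Finset.sum_comm]
  refine Finset.sum_congr rfl fun K _ => Finset.sum_congr rfl fun J _ => ?_
  rw [h12 J K I]
  ring

theorem tensorContract_dotProduct_comm (h12 : ∀ I J K, Υ I J K = Υ J I K)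
    (h23 : ∀ I J K, Υ I J K = Υ I K J) (x y z : ι → R) :
    tensorContract Υ x y ⬝ᵥ z = tensorContract Υ z y ⬝ᵥ x := by
  simp only [dotProduct, tensorContract_apply, Finset.sum_mul]
  rw [Finset.sum_comm]
  refine Finset.sum_congr rfl fun I _ => Finset.sum_congr rfl fun J _ =>
    Finset.sum_congr rfl fun K _ => ?_
  rw [h12 J K I, h23 K J I, h12 K I J]
  ring

theorem sum_mul_mul_mul_eq_tensorContract_dotProduct (x : ι → R) :
    ∑ I, ∑ J, ∑ K, Υ I J K * x I * x J * x K = tensorContract Υ x x ⬝ᵥ x := by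
  simp only [dotProduct, tensorContract_apply, Finset.sum_mul]
  conv_rhs => rw [Finset.sum_comm]
  exact Finset.sum_congr rfl fun I _ => Finset.sum_comm

theorem six_mul_tensorContract_dotProduct (h12 : ∀ I J K, Υ I J K = Υ J I K)
    (h23 : ∀ I J K, Υ I J K = Υ I K J) (x v : ι → R) :
    6 * (tensorContract Υ x x ⬝ᵥ v) = tensorContract Υ (x + v) (x + v) ⬝ᵥ (x + v)
      - tensorContract Υ (x - v) (x - v) ⬝ᵥ (x - v) - 2 * (tensorContract Υ v v ⬝ᵥ v) := by
  simp only [map_add, map_sub, LinearMap.add_apply, LinearMap.sub_apply, add_dotProduct,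
    sub_dotProduct, dotProduct_add, dotProduct_sub, tensorContract_comm h12 x v,
    tensorContract_dotProduct_comm h12 h23 v x x]
  ring

end TensorContraction

theorem sum_pairings_eq_of_dotProduct_self_tensorContract {ι 𝕜 : Type*} [Fintype ι]
    [DecidableEq ι] [Field 𝕜] [CharZero 𝕜] {Υ : ι → ι → ι → 𝕜}
    (h12 : ∀ I J K, Υ I J K = Υ J I K)
    (hq : ∀ x, tensorContract Υ x x ⬝ᵥ tensorContract Υ x x = (x ⬝ᵥ x) ^ 2) (J K L M : ι) :
    ∑ I, (Υ J K I * Υ L M I + Υ L J I * Υ K M I + Υ K L I * Υ J M I) =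
      (if J = K then (1 : 𝕜) else 0) * (if L = M then (1 : 𝕜) else 0)
      + (if L = J then (1 : 𝕜) else 0) * (if K = M then (1 : 𝕜) else 0)
      + (if K = L then (1 : 𝕜) else 0) * (if J = M then (1 : 𝕜) else 0) := by
  have h := quartic_polar (g := dotProductBilin 𝕜 𝕜) (h := dotProductBilin 𝕜 𝕜)
    (tensorContract_comm h12) ⟨dotProduct_comm⟩ ⟨dotProduct_comm⟩ hq
    (Pi.single J 1) (Pi.single K 1) (Pi.single L 1) (Pi.single M 1)
  simp only [dotProductBilin_apply_apply, tensorContract_single_single, single_one_dotProduct,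
    Pi.single_apply] at h
  simpa only [dotProduct, Finset.sum_add_distrib] using h

theorem Fin.sum_univ_fourteen {M : Type*} [AddCommMonoid M] (f : Fin 14 → M) :
    ∑ i, f i = f 0 + f 1 + f 2 + f 3 + f 4 + f 5 + f 6 + f 7 + f 8 + f 9 + f 10 + f 11 + f 12
      + f 13 := by
  simp only [Fin.sum_univ_castSucc, Fin.sum_univ_zero, zero_add]
  rfl

/-- `Υ¹(x, x, ·)`, i.e. one third of the gradient of `½ det₁ A(x)`. -/
noncomputable def gradA14 (x : Fin 14 → ℝ) : Fin 14 → ℝ :=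
  ![-x 0 * x 4 + √3 * (x 0 * x 3 + x 1 * x 2 + x 6 * x 7 + x 10 * x 12 + x 11 * x 13),
    -x 1 * x 4 + √3 * (x 0 * x 2 - x 1 * x 3 - x 5 * x 7 - x 8 * x 12 - x 9 * x 13),
    2 * x 2 * x 4 + √3 * (x 0 * x 1 + x 5 * x 6 + x 8 * x 10 + x 9 * x 11),
    2 * x 3 * x 4
      + √3 / 2 * (x 0 ^ 2 - x 1 ^ 2 + x 5 ^ 2 - x 6 ^ 2 + x 8 ^ 2 + x 9 ^ 2 - x 10 ^ 2 - x 11 ^ 2),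
    x 2 ^ 2 + x 3 ^ 2 - x 4 ^ 2 + x 7 ^ 2 + x 12 ^ 2 + x 13 ^ 2
      - (x 0 ^ 2 + x 1 ^ 2 + x 5 ^ 2 + x 6 ^ 2 + x 8 ^ 2 + x 9 ^ 2 + x 10 ^ 2 + x 11 ^ 2) / 2,
    -x 4 * x 5 + √3 * (-x 1 * x 7 + x 2 * x 6 + x 3 * x 5 + x 10 * x 13 - x 11 * x 12),
    -x 4 * x 6 + √3 * (x 0 * x 7 + x 2 * x 5 - x 3 * x 6 - x 8 * x 13 + x 9 * x 12),
    2 * x 4 * x 7 + √3 * (x 0 * x 6 - x 1 * x 5 + x 8 * x 11 - x 9 * x 10),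
    -x 4 * x 8 + √3 * (-x 1 * x 12 + x 2 * x 10 + x 3 * x 8 - x 6 * x 13 + x 7 * x 11),
    -x 4 * x 9 + √3 * (-x 1 * x 13 + x 2 * x 11 + x 3 * x 9 + x 6 * x 12 - x 7 * x 10),
    -x 4 * x 10 + √3 * (x 0 * x 12 + x 2 * x 8 - x 3 * x 10 + x 5 * x 13 - x 7 * x 9),
    -x 4 * x 11 + √3 * (x 0 * x 13 + x 2 * x 9 - x 3 * x 11 - x 5 * x 12 + x 7 * x 8),
    2 * x 4 * x 12 + √3 * (x 0 * x 10 - x 1 * x 8 - x 5 * x 11 + x 6 * x 9),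
    2 * x 4 * x 13 + √3 * (x 0 * x 11 - x 1 * x 9 + x 5 * x 10 - x 6 * x 8)]

theorem re_det1_A14 (x : Fin 14 → ℝ) : (det1 (A14 x)).re = 2 * (gradA14 x ⬝ᵥ x) := by
  have h2 : √3 ^ 2 = 3 := Real.sq_sqrt (by norm_num)
  have h3 : √3 ^ 3 = 3 * √3 := by rw [pow_succ, h2]
  -- `Xq1`, `Xq2`, `Xq3` may only be unfolded afterwards, or these lemmas no longer fire.
  simp only [det1, A14, cons_val_zero, cons_val_one, cons_val_two, head_cons, tail_cons,
    Quaternion.re_mul, Quaternion.imI_mul, Quaternion.imJ_mul, Quaternion.imK_mul,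
    Quaternion.re_add, Quaternion.re_sub, Quaternion.re_coe, Quaternion.imI_coe,
    Quaternion.imJ_coe, Quaternion.imK_coe, Quaternion.re_star, Quaternion.imI_star,
    Quaternion.imJ_star, Quaternion.imK_star]
  simp only [Xq1, Xq2, Xq3, gradA14, dotProduct, Fin.sum_univ_fourteen, cons_val, Fin.isValue]
  ring_nf
  simp only [h2, h3]
  ring

set_option maxRecDepth 10000 in
theorem gradA14_dotProduct_self (x : Fin 14 → ℝ) :
    gradA14 x ⬝ᵥ gradA14 x = (x ⬝ᵥ x) ^ 2 := by
  have h2 : √3 ^ 2 = 3 := Real.sq_sqrt (by norm_num)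
  simp only [gradA14, dotProduct, Fin.sum_univ_fourteen, cons_val, cons_val_zero, cons_val_one,
    Fin.isValue]
  ring_nf
  simp only [h2]
  ring

theorem gradA14_polar (x : Fin 14 → ℝ) (I : Fin 14) :
    6 * gradA14 x I = gradA14 (x + Pi.single I 1) ⬝ᵥ (x + Pi.single I 1)
      - gradA14 (x - Pi.single I 1) ⬝ᵥ (x - Pi.single I 1)
      - 2 * (gradA14 (Pi.single I 1) ⬝ᵥ Pi.single I 1) := by
  simp only [dotProduct, Pi.add_apply, Pi.sub_apply, Fin.sum_univ_fourteen]
  fin_cases I <;>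
    (simp only [gradA14, Fin.isValue, Fin.zero_eta, Fin.mk_one, Fin.reduceFinMk, cons_val,
      cons_val_zero, cons_val_one, Pi.add_apply, Pi.sub_apply, Pi.single_eq_same,
      Pi.single_eq_of_ne, ne_eq, Fin.reduceEq, not_false_eq_true, one_ne_zero, zero_ne_one]
     ring)

theorem sum_gradA14_single (I : Fin 14) : ∑ J, gradA14 (Pi.single J 1) I = 0 := by
  rw [Fin.sum_univ_fourteen]
  fin_cases I <;>
    (simp only [gradA14, Fin.isValue, Fin.zero_eta, Fin.mk_one, Fin.reduceFinMk, cons_val,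
      cons_val_zero, cons_val_one, Pi.single_eq_same, Pi.single_eq_of_ne, ne_eq, Fin.reduceEq,
      not_false_eq_true, one_ne_zero, zero_ne_one]
     ring)

/-- The totally symmetric tensor `Υ¹` on `ℝ¹⁴` with `Υ¹_{IJK}x^Ix^Jx^K = ½ det₁ A(x)`
satisfies total symmetry (i), trace-freeness (ii), and the quadratic identity (iii). -/
theorem statement4 (Υ : Fin 14 → Fin 14 → Fin 14 → ℝ)
    (hsym1 : ∀ I J K, Υ I J K = Υ J I K)
    (hsym2 : ∀ I J K, Υ I J K = Υ I K J)
    (hdef : ∀ x : Fin 14 → ℝ,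
      ((∑ I, ∑ J, ∑ K, Υ I J K * x I * x J * x K : ℝ) : ℍ[ℝ]) =
        ((1 / 2 : ℝ) : ℍ[ℝ]) * det1 (A14 x)) :
    ((∀ I J K, Υ I J K = Υ J I K) ∧ (∀ I J K, Υ I J K = Υ I K J)) ∧
    (∀ I, ∑ J, Υ I J J = 0) ∧
    (∀ J K L M, (∑ I, (Υ J K I * Υ L M I + Υ L J I * Υ K M I + Υ K L I * Υ J M I)) =
      (if J = K then (1 : ℝ) else 0) * (if L = M then (1 : ℝ) else 0)
      + (if L = J then (1 : ℝ) else 0) * (if K = M then (1 : ℝ) else 0)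
      + (if K = L then (1 : ℝ) else 0) * (if J = M then (1 : ℝ) else 0)) := by
  have hcubic : ∀ x, tensorContract Υ x x ⬝ᵥ x = gradA14 x ⬝ᵥ x := fun x => by
    have h := congrArg QuaternionAlgebra.re (hdef x)
    rw [Quaternion.coe_mul_eq_smul, Quaternion.re_smul, Quaternion.re_coe, re_det1_A14,
      smul_eq_mul, sum_mul_mul_mul_eq_tensorContract_dotProduct] at h
    linarith
  have hgrad : ∀ x, tensorContract Υ x x = gradA14 x := fun x => funext fun I => by
    have h := six_mul_tensorContract_dotProduct hsym1 hsym2 x (Pi.single I 1)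
    rw [dotProduct_single_one, hcubic, hcubic, hcubic, ← gradA14_polar] at h
    linarith
  refine ⟨⟨hsym1, hsym2⟩, fun I => ?_, sum_pairings_eq_of_dotProduct_self_tensorContract hsym1
    fun x => by rw [hgrad, gradA14_dotProduct_self]⟩
  calc ∑ J, Υ I J J = ∑ J, gradA14 (Pi.single J 1) I :=
        Finset.sum_congr rfl fun J _ => by rw [← hgrad, tensorContract_single_single, hsym1, hsym2]
    _ = 0 := sum_gradA14_single I
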